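/- arXiv:2506.22522 — 2 statements merged into one kernel-verified Lean document; each statement's English description precedes it below -/
import Mathlib

section
/- Let 𝓕 = 𝓖 = ((e_m, e_m*))_{m≥1} be the canonical unconditional Schauder basis of c_0 with its coordinate functionals. Then for every u = ∑_{i=1}^k ∑_{j=1}^{k'} λ_{i,j} e_i ⊗ e_j in c_0 ⊗ c_0, α^Bess_{𝓕,𝓖}(u) = max_{1≤i≤k, 1≤j≤k'} |λ_{i,j}|, which equals the injective tensor norm ε(u) of u in c_0 ⊗ c_0. -/
open Filter Finset TensorProduct

variable {𝕂 : Type*} [RCLike 𝕂]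

/-- The canonical basis vector `e_n = (δ_{n,k})_k` of `c₀`. -/
noncomputable def c0Basis (𝕂 : Type*) [RCLike 𝕂] (n : ℕ) :
    ZeroAtInftyContinuousMap ℕ 𝕂 :=
  ⟨⟨fun k => if k = n then 1 else 0, continuous_of_discreteTopology⟩, by
    rw [cocompact_eq_atTop]
    have h : (fun k : ℕ => if k = n then (1 : 𝕂) else 0) =ᶠ[atTop] fun _ => 0 := by
      filter_upwards [Filter.eventually_gt_atTop n] with k hk
      simp [Nat.ne_of_gt hk]
    exact Filter.Tendsto.congr' h.symm tendsto_const_nhds⟩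

/-- The functional `f* ⊗ g*` on the algebraic tensor product. -/
noncomputable def dualPair {E F : Type*} [NormedAddCommGroup E] [NormedSpace 𝕂 E]
    [NormedAddCommGroup F] [NormedSpace 𝕂 F]
    (f : E →L[𝕂] 𝕂) (g : F →L[𝕂] 𝕂) : E ⊗[𝕂] F →ₗ[𝕂] 𝕂 :=
  TensorProduct.lift (((LinearMap.mul 𝕂 𝕂).compl₂ g.toLinearMap).comp f.toLinearMap)

/-- The Besselian crossnorm `α^Bess_{𝓕,𝓖}` on `c₀ ⊗ c₀`, where `𝓕 = 𝓖` is the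
canonical unconditional Schauder basis `((e_m, e_m*))` of `c₀` (so `e_m*(x) = x_m`). -/
noncomputable def alphaBessC0
    (u : ZeroAtInftyContinuousMap ℕ 𝕂 ⊗[𝕂] ZeroAtInftyContinuousMap ℕ 𝕂) : ℝ :=
  sInf {t : ℝ | ∃ (R : ℕ) (x y : ℕ → ZeroAtInftyContinuousMap ℕ 𝕂),
    u = ∑ r ∈ Finset.range R, x r ⊗ₜ[𝕂] y r ∧
    t = ⨆ fg : {f : ZeroAtInftyContinuousMap ℕ 𝕂 →L[𝕂] 𝕂 // ‖f‖ ≤ 1} ×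
          {g : ZeroAtInftyContinuousMap ℕ 𝕂 →L[𝕂] 𝕂 // ‖g‖ ≤ 1},
      ∑ r ∈ Finset.range R, ∑' mn : ℕ × ℕ,
        ‖x r mn.1‖ * ‖y r mn.2‖ * ‖fg.1.1 (c0Basis 𝕂 mn.1)‖ * ‖fg.2.1 (c0Basis 𝕂 mn.2)‖}

/-- The injective tensor norm `ε` on `c₀ ⊗ c₀` (with respect to the `c₀` norms). -/
noncomputable def injNormC0
    (u : ZeroAtInftyContinuousMap ℕ 𝕂 ⊗[𝕂] ZeroAtInftyContinuousMap ℕ 𝕂) : ℝ :=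
  ⨆ fg : {f : ZeroAtInftyContinuousMap ℕ 𝕂 →L[𝕂] 𝕂 // ‖f‖ ≤ 1} ×
      {g : ZeroAtInftyContinuousMap ℕ 𝕂 →L[𝕂] 𝕂 // ‖g‖ ≤ 1},
    ‖dualPair fg.1.1 fg.2.1 u‖

/-!
Testing a representation `u = ∑_r x_r ⊗ y_r` against the coordinate functionals `e_i*`, `e_j*`
(of norm `1`) bounds its Besselian sum below by `|∑_r x_r(i) y_r(j)| = |λ_{i,j}|`. Conversely,
every functional on `c₀` is `ℓ¹` on the basis, `∑_m |f(e_m)| ≤ ‖f‖`, so the representation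
`u = ∑_i e_i ⊗ (∑_j λ_{i,j} e_j)` has Besselian sum at most `max |λ_{i,j}|`. The same two facts,
applied to `f ⊗ g` directly, compute `ε(u)`.
-/

open scoped ZeroAtInfty

namespace ZeroAtInftyContinuousMap

variable {α β : Type*} [TopologicalSpace α] [NormedAddCommGroup β]

theorem norm_apply_le (x : C₀(α, β)) (a : α) : ‖x a‖ ≤ ‖x‖ := by
  rw [← norm_toBCF_eq_norm]
  exact BoundedContinuousFunction.norm_coe_le_norm x.toBCF a

theorem norm_le_of_forall_le {x : C₀(α, β)} {C : ℝ} (hC : 0 ≤ C) (h : ∀ a, ‖x a‖ ≤ C) :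
    ‖x‖ ≤ C := by
  rw [← norm_toBCF_eq_norm]
  exact (BoundedContinuousFunction.norm_le hC).2 h

variable (𝕜 : Type*) [NontriviallyNormedField 𝕜] [NormedSpace 𝕜 β]

noncomputable def evalCLM (a : α) : C₀(α, β) →L[𝕜] β :=
  LinearMap.mkContinuous
    { toFun := fun x => x a
      map_add' := fun _ _ => rfl
      map_smul' := fun _ _ => rfl } 1
    (fun x => by simpa using norm_apply_le x a)

@[simp]
theorem evalCLM_apply (a : α) (x : C₀(α, β)) : evalCLM 𝕜 a x = x a := rfl

theorem norm_evalCLM_le (a : α) : ‖evalCLM (β := β) 𝕜 a‖ ≤ 1 :=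
  LinearMap.mkContinuous_norm_le _ zero_le_one _

end ZeroAtInftyContinuousMap

open ZeroAtInftyContinuousMap

theorem c0Basis_apply (n k : ℕ) : c0Basis 𝕂 n k = if k = n then 1 else 0 := rfl

theorem sum_smul_c0Basis_apply (s : Finset ℕ) (c : ℕ → 𝕂) (k : ℕ) :
    (∑ m ∈ s, c m • c0Basis 𝕂 m) k = if k ∈ s then c k else 0 := by
  rw [← evalCLM_apply 𝕂, map_sum]
  simp [c0Basis_apply]

/-- Test `f` against `∑ m ∈ s, (conj (f e_m) / ‖f e_m‖) • e_m`, which has norm at most `1`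
(division by `‖f e_m‖ = 0` gives `0`, so no case split is needed). -/
theorem sum_norm_apply_c0Basis_le (f : C₀(ℕ, 𝕂) →L[𝕂] 𝕂) (s : Finset ℕ) :
    ∑ m ∈ s, ‖f (c0Basis 𝕂 m)‖ ≤ ‖f‖ := by
  set c : ℕ → 𝕂 := fun m => starRingEnd 𝕂 (f (c0Basis 𝕂 m)) / (‖f (c0Basis 𝕂 m)‖ : 𝕂)
  have hc : ∀ m, ‖c m‖ ≤ 1 := fun m => by
    simp only [c, norm_div, RCLike.norm_conj, RCLike.norm_ofReal, abs_norm]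
    exact div_self_le_one _
  have hcf : ∀ m, c m * f (c0Basis 𝕂 m) = (‖f (c0Basis 𝕂 m)‖ : 𝕂) := fun m => by
    by_cases h : f (c0Basis 𝕂 m) = 0
    · simp [c, h]
    · have : (‖f (c0Basis 𝕂 m)‖ : 𝕂) ≠ 0 := by simpa using h
      rw [div_mul_eq_mul_div, RCLike.conj_mul, div_eq_iff this, sq]
  set z := ∑ m ∈ s, c m • c0Basis 𝕂 m
  have hz : ‖z‖ ≤ 1 := norm_le_of_forall_le zero_le_one fun k => by
    rw [sum_smul_c0Basis_apply]
    split_ifs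
    exacts [hc k, by simp]
  have hfz : f z = ((∑ m ∈ s, ‖f (c0Basis 𝕂 m)‖ : ℝ) : 𝕂) := by
    simp [z, map_sum, hcf]
  calc ∑ m ∈ s, ‖f (c0Basis 𝕂 m)‖ = ‖f z‖ := by
        rw [hfz, RCLike.norm_ofReal, abs_of_nonneg (sum_nonneg fun _ _ => norm_nonneg _)]
    _ ≤ ‖f‖ * ‖z‖ := f.le_opNorm z
    _ ≤ ‖f‖ := mul_le_of_le_one_right (norm_nonneg f) hz

theorem summable_norm_apply_c0Basis (f : C₀(ℕ, 𝕂) →L[𝕂] 𝕂) :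
    Summable fun m => ‖f (c0Basis 𝕂 m)‖ :=
  summable_of_sum_range_le (fun _ => norm_nonneg _) fun _ => sum_norm_apply_c0Basis_le f _

theorem tsum_norm_apply_c0Basis_le (f : C₀(ℕ, 𝕂) →L[𝕂] 𝕂) :
    ∑' m, ‖f (c0Basis 𝕂 m)‖ ≤ ‖f‖ :=
  Real.tsum_le_of_sum_range_le (fun _ => norm_nonneg _) fun _ => sum_norm_apply_c0Basis_le f _

noncomputable def c0BessSum (x : C₀(ℕ, 𝕂)) (f : C₀(ℕ, 𝕂) →L[𝕂] 𝕂) : ℝ :=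
  ∑' m, ‖x m‖ * ‖f (c0Basis 𝕂 m)‖

theorem c0BessSum_nonneg (x : C₀(ℕ, 𝕂)) (f : C₀(ℕ, 𝕂) →L[𝕂] 𝕂) : 0 ≤ c0BessSum x f :=
  tsum_nonneg fun _ => by positivity

theorem summable_c0BessSum (x : C₀(ℕ, 𝕂)) (f : C₀(ℕ, 𝕂) →L[𝕂] 𝕂) :
    Summable fun m => ‖x m‖ * ‖f (c0Basis 𝕂 m)‖ :=
  .of_nonneg_of_le (fun _ => by positivity)
    (fun m => mul_le_mul_of_nonneg_right (norm_apply_le x m) (norm_nonneg _))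
    ((summable_norm_apply_c0Basis f).mul_left ‖x‖)

theorem c0BessSum_le {x : C₀(ℕ, 𝕂)} {C : ℝ} (hC : ∀ m, ‖x m‖ ≤ C)
    (f : C₀(ℕ, 𝕂) →L[𝕂] 𝕂) : c0BessSum x f ≤ C * ‖f‖ := by
  have hC0 : 0 ≤ C := (norm_nonneg _).trans (hC 0)
  calc c0BessSum x f ≤ ∑' m, C * ‖f (c0Basis 𝕂 m)‖ :=
        (summable_c0BessSum x f).tsum_le_tsum
          (fun m => mul_le_mul_of_nonneg_right (hC m) (norm_nonneg _))
          ((summable_norm_apply_c0Basis f).mul_left C)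
    _ = C * ∑' m, ‖f (c0Basis 𝕂 m)‖ := tsum_mul_left
    _ ≤ C * ‖f‖ := mul_le_mul_of_nonneg_left (tsum_norm_apply_c0Basis_le f) hC0

theorem c0BessSum_c0Basis (i : ℕ) (f : C₀(ℕ, 𝕂) →L[𝕂] 𝕂) :
    c0BessSum (c0Basis 𝕂 i) f = ‖f (c0Basis 𝕂 i)‖ := by
  rw [c0BessSum, tsum_eq_single i fun m hm => by simp [c0Basis_apply, hm]]
  simp [c0Basis_apply]

theorem c0BessSum_evalCLM (x : C₀(ℕ, 𝕂)) (i : ℕ) : c0BessSum x (evalCLM 𝕂 i) = ‖x i‖ := by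
  rw [c0BessSum, tsum_eq_single i fun m hm => by simp [c0Basis_apply, Ne.symm hm]]
  simp [c0Basis_apply]

theorem tsum_prod_eq_c0BessSum_mul (x y : C₀(ℕ, 𝕂)) (f g : C₀(ℕ, 𝕂) →L[𝕂] 𝕂) :
    ∑' mn : ℕ × ℕ, ‖x mn.1‖ * ‖y mn.2‖ * ‖f (c0Basis 𝕂 mn.1)‖ * ‖g (c0Basis 𝕂 mn.2)‖ =
      c0BessSum x f * c0BessSum y g := by
  have hnorm : ∀ (z : C₀(ℕ, 𝕂)) (h : C₀(ℕ, 𝕂) →L[𝕂] 𝕂),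
      Summable fun m => ‖‖z m‖ * ‖h (c0Basis 𝕂 m)‖‖ := fun z h => by
    simpa only [norm_mul, norm_norm] using summable_c0BessSum z h
  rw [c0BessSum, c0BessSum, tsum_mul_tsum_of_summable_norm (hnorm x f) (hnorm y g)]
  exact tsum_congr fun mn => by ring

/-- `Bess(∑_{r<R} x r ⊗ y r)` for `𝓕 = 𝓖` the canonical basis of `c₀`. -/
noncomputable def c0BessNorm (R : ℕ) (x y : ℕ → C₀(ℕ, 𝕂)) : ℝ :=
  ⨆ fg : {f : C₀(ℕ, 𝕂) →L[𝕂] 𝕂 // ‖f‖ ≤ 1} × {g : C₀(ℕ, 𝕂) →L[𝕂] 𝕂 // ‖g‖ ≤ 1},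
    ∑ r ∈ range R, c0BessSum (x r) fg.1.1 * c0BessSum (y r) fg.2.1

theorem alphaBessC0_eq_sInf (u : C₀(ℕ, 𝕂) ⊗[𝕂] C₀(ℕ, 𝕂)) :
    alphaBessC0 u = sInf {t : ℝ | ∃ (R : ℕ) (x y : ℕ → C₀(ℕ, 𝕂)),
      u = ∑ r ∈ range R, x r ⊗ₜ[𝕂] y r ∧ t = c0BessNorm R x y} := by
  simp only [alphaBessC0, c0BessNorm, tsum_prod_eq_c0BessSum_mul]

theorem c0BessNorm_nonneg (R : ℕ) (x y : ℕ → C₀(ℕ, 𝕂)) : 0 ≤ c0BessNorm R x y :=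
  Real.iSup_nonneg fun _ => sum_nonneg fun _ _ =>
    mul_nonneg (c0BessSum_nonneg _ _) (c0BessSum_nonneg _ _)

theorem alphaBessC0_eq_of_forall_le {u : C₀(ℕ, 𝕂) ⊗[𝕂] C₀(ℕ, 𝕂)} {M : ℝ}
    (hlower : ∀ (R : ℕ) (x y : ℕ → C₀(ℕ, 𝕂)),
      u = ∑ r ∈ range R, x r ⊗ₜ[𝕂] y r → M ≤ c0BessNorm R x y)
    (R : ℕ) (x y : ℕ → C₀(ℕ, 𝕂)) (hu : u = ∑ r ∈ range R, x r ⊗ₜ[𝕂] y r)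
    (hM : c0BessNorm R x y ≤ M) : alphaBessC0 u = M := by
  rw [alphaBessC0_eq_sInf]
  refine IsLeast.csInf_eq ⟨⟨R, x, y, hu, (hM.antisymm (hlower R x y hu)).symm⟩, ?_⟩
  rintro _ ⟨R, x, y, hu, rfl⟩
  exact hlower R x y hu

theorem c0BessNorm_le {R : ℕ} {x y : ℕ → C₀(ℕ, 𝕂)} {C : ℝ} (hC : 0 ≤ C)
    (h : ∀ f g : C₀(ℕ, 𝕂) →L[𝕂] 𝕂, ‖f‖ ≤ 1 → ‖g‖ ≤ 1 →
      ∑ r ∈ range R, c0BessSum (x r) f * c0BessSum (y r) g ≤ C) :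
    c0BessNorm R x y ≤ C :=
  Real.iSup_le (fun fg => h _ _ fg.1.2 fg.2.2) hC

theorem le_c0BessNorm (R : ℕ) (x y : ℕ → C₀(ℕ, 𝕂)) {f g : C₀(ℕ, 𝕂) →L[𝕂] 𝕂}
    (hf : ‖f‖ ≤ 1) (hg : ‖g‖ ≤ 1) :
    ∑ r ∈ range R, c0BessSum (x r) f * c0BessSum (y r) g ≤ c0BessNorm R x y := by
  have hunit : ∀ (z : C₀(ℕ, 𝕂)) {h : C₀(ℕ, 𝕂) →L[𝕂] 𝕂}, ‖h‖ ≤ 1 → c0BessSum z h ≤ ‖z‖ :=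
    fun z h hh => (c0BessSum_le (norm_apply_le z) h).trans
      (mul_le_of_le_one_right (norm_nonneg _) hh)
  rw [c0BessNorm]
  refine le_ciSup_of_le ⟨∑ r ∈ range R, ‖x r‖ * ‖y r‖, ?_⟩ (⟨f, hf⟩, ⟨g, hg⟩) le_rfl
  rintro _ ⟨⟨⟨f, hf⟩, ⟨g, hg⟩⟩, rfl⟩
  exact sum_le_sum fun r _ =>
    mul_le_mul (hunit _ hf) (hunit _ hg) (c0BessSum_nonneg _ _) (norm_nonneg _)

theorem dualPair_tmul {E F : Type*} [NormedAddCommGroup E] [NormedSpace 𝕂 E]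
    [NormedAddCommGroup F] [NormedSpace 𝕂 F] (f : E →L[𝕂] 𝕂) (g : F →L[𝕂] 𝕂) (x : E) (y : F) :
    dualPair f g (x ⊗ₜ[𝕂] y) = f x * g y := rfl

theorem norm_dualPair_evalCLM_le_c0BessNorm (R : ℕ) (x y : ℕ → C₀(ℕ, 𝕂)) (i j : ℕ) :
    ‖dualPair (evalCLM 𝕂 i) (evalCLM 𝕂 j) (∑ r ∈ range R, x r ⊗ₜ[𝕂] y r)‖ ≤
      c0BessNorm R x y :=
  calc ‖dualPair (evalCLM 𝕂 i) (evalCLM 𝕂 j) (∑ r ∈ range R, x r ⊗ₜ[𝕂] y r)‖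
      = ‖∑ r ∈ range R, x r i * y r j‖ := by simp [map_sum, dualPair_tmul]
    _ ≤ ∑ r ∈ range R, ‖x r i‖ * ‖y r j‖ := by
      simpa only [norm_mul] using norm_sum_le (range R) fun r => x r i * y r j
    _ = ∑ r ∈ range R, c0BessSum (x r) (evalCLM 𝕂 i) * c0BessSum (y r) (evalCLM 𝕂 j) := by
      simp only [c0BessSum_evalCLM]
    _ ≤ c0BessNorm R x y := le_c0BessNorm R x y (norm_evalCLM_le 𝕂 i) (norm_evalCLM_le 𝕂 j)

section FiniteTensor

variable (s t : Finset ℕ) (lam : ℕ → ℕ → 𝕂)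

theorem dualPair_sum_smul_tmul (f g : C₀(ℕ, 𝕂) →L[𝕂] 𝕂) :
    dualPair f g (∑ i ∈ s, ∑ j ∈ t, lam i j • (c0Basis 𝕂 i ⊗ₜ[𝕂] c0Basis 𝕂 j)) =
      ∑ i ∈ s, ∑ j ∈ t, lam i j * (f (c0Basis 𝕂 i) * g (c0Basis 𝕂 j)) := by
  simp only [map_sum, map_smul, dualPair_tmul, smul_eq_mul]

theorem dualPair_evalCLM_sum_smul_tmul {i j : ℕ} (hi : i ∈ s) (hj : j ∈ t) :
    dualPair (evalCLM 𝕂 i) (evalCLM 𝕂 j)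
      (∑ i ∈ s, ∑ j ∈ t, lam i j • (c0Basis 𝕂 i ⊗ₜ[𝕂] c0Basis 𝕂 j)) = lam i j := by
  rw [dualPair_sum_smul_tmul]
  simp [c0Basis_apply, hi, hj]

theorem norm_dualPair_sum_smul_tmul_le {M : ℝ} (hM0 : 0 ≤ M)
    (hM : ∀ i ∈ s, ∀ j ∈ t, ‖lam i j‖ ≤ M)
    {f g : C₀(ℕ, 𝕂) →L[𝕂] 𝕂} (hf : ‖f‖ ≤ 1) (hg : ‖g‖ ≤ 1) :
    ‖dualPair f g (∑ i ∈ s, ∑ j ∈ t, lam i j • (c0Basis 𝕂 i ⊗ₜ[𝕂] c0Basis 𝕂 j))‖ ≤ M := by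
  rw [dualPair_sum_smul_tmul]
  calc ‖∑ i ∈ s, ∑ j ∈ t, lam i j * (f (c0Basis 𝕂 i) * g (c0Basis 𝕂 j))‖
      ≤ ∑ i ∈ s, ∑ j ∈ t, M * (‖f (c0Basis 𝕂 i)‖ * ‖g (c0Basis 𝕂 j)‖) := by
        refine (norm_sum_le _ _).trans (sum_le_sum fun i hi => ?_)
        refine (norm_sum_le _ _).trans (sum_le_sum fun j hj => ?_)
        rw [norm_mul, norm_mul]
        exact mul_le_mul_of_nonneg_right (hM i hi j hj) (by positivity)
    _ = M * ((∑ i ∈ s, ‖f (c0Basis 𝕂 i)‖) * ∑ j ∈ t, ‖g (c0Basis 𝕂 j)‖) := by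
        rw [sum_mul_sum, mul_sum]; simp only [mul_sum]
    _ ≤ M * (1 * 1) := by
        gcongr
        · exact (sum_norm_apply_c0Basis_le f s).trans hf
        · exact (sum_norm_apply_c0Basis_le g t).trans hg
    _ = M := by ring

theorem sum_smul_tmul_eq_sum_c0Basis_tmul :
    ∑ i ∈ s, ∑ j ∈ t, lam i j • (c0Basis 𝕂 i ⊗ₜ[𝕂] c0Basis 𝕂 j) =
      ∑ i ∈ s, c0Basis 𝕂 i ⊗ₜ[𝕂] ∑ j ∈ t, lam i j • c0Basis 𝕂 j := by
  simp only [tmul_sum, tmul_smul]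

end FiniteTensor

theorem c0BessNorm_c0Basis_rows_le {k k' : ℕ} {lam : ℕ → ℕ → 𝕂} {M : ℝ} (hM0 : 0 ≤ M)
    (hM : ∀ i ∈ range k, ∀ j ∈ range k', ‖lam i j‖ ≤ M) :
    c0BessNorm k (c0Basis 𝕂) (fun i => ∑ j ∈ range k', lam i j • c0Basis 𝕂 j) ≤ M := by
  refine c0BessNorm_le hM0 fun f g hf hg => ?_
  have hrow : ∀ i ∈ range k, ∀ n, ‖(∑ j ∈ range k', lam i j • c0Basis 𝕂 j) n‖ ≤ M :=
    fun i hi n => by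
      rw [sum_smul_c0Basis_apply]
      split_ifs with hn
      exacts [hM i hi n hn, by simpa using hM0]
  calc ∑ i ∈ range k, c0BessSum (c0Basis 𝕂 i) f *
        c0BessSum (∑ j ∈ range k', lam i j • c0Basis 𝕂 j) g
      ≤ ∑ i ∈ range k, ‖f (c0Basis 𝕂 i)‖ * M := sum_le_sum fun i hi => by
        rw [c0BessSum_c0Basis]
        gcongr
        exact (c0BessSum_le (hrow i hi) g).trans (mul_le_of_le_one_right hM0 hg)
    _ = (∑ i ∈ range k, ‖f (c0Basis 𝕂 i)‖) * M := sum_mul _ _ _ |>.symm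
    _ ≤ M := mul_le_of_le_one_left hM0 ((sum_norm_apply_c0Basis_le f _).trans hf)

theorem norm_le_iSup_fin_prod (k k' : ℕ) (lam : ℕ → ℕ → 𝕂) :
    ∀ i ∈ range k, ∀ j ∈ range k', ‖lam i j‖ ≤ ⨆ ij : Fin k × Fin k', ‖lam ij.1 ij.2‖ :=
  fun i hi j hj => le_ciSup (f := fun ij : Fin k × Fin k' => ‖lam ij.1 ij.2‖)
    (Finite.bddAbove_range _) (⟨i, mem_range.1 hi⟩, ⟨j, mem_range.1 hj⟩)

theorem alphaBessC0_sum_smul_tmul (k k' : ℕ) (lam : ℕ → ℕ → 𝕂) :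
    alphaBessC0 (∑ i ∈ range k, ∑ j ∈ range k', lam i j • (c0Basis 𝕂 i ⊗ₜ[𝕂] c0Basis 𝕂 j)) =
      ⨆ ij : Fin k × Fin k', ‖lam ij.1 ij.2‖ := by
  set M := ⨆ ij : Fin k × Fin k', ‖lam ij.1 ij.2‖
  have hM0 : 0 ≤ M := Real.iSup_nonneg fun _ => norm_nonneg _
  have hM := norm_le_iSup_fin_prod k k' lam
  have hrep := sum_smul_tmul_eq_sum_c0Basis_tmul (range k) (range k') lam
  have hlower : ∀ (R : ℕ) (x y : ℕ → C₀(ℕ, 𝕂)),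
      ∑ i ∈ range k, ∑ j ∈ range k', lam i j • (c0Basis 𝕂 i ⊗ₜ[𝕂] c0Basis 𝕂 j) =
        ∑ r ∈ range R, x r ⊗ₜ[𝕂] y r → M ≤ c0BessNorm R x y := fun R x y hu =>
    Real.iSup_le (fun ij => by
      rw [← dualPair_evalCLM_sum_smul_tmul (range k) (range k') lam
        (mem_range.2 ij.1.2) (mem_range.2 ij.2.2), hu]
      exact norm_dualPair_evalCLM_le_c0BessNorm R x y ij.1 ij.2) (c0BessNorm_nonneg R x y)
  exact alphaBessC0_eq_of_forall_le hlower k _ _ hrep (c0BessNorm_c0Basis_rows_le hM0 hM)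

theorem injNormC0_sum_smul_tmul (k k' : ℕ) (lam : ℕ → ℕ → 𝕂) :
    injNormC0 (∑ i ∈ range k, ∑ j ∈ range k', lam i j • (c0Basis 𝕂 i ⊗ₜ[𝕂] c0Basis 𝕂 j)) =
      ⨆ ij : Fin k × Fin k', ‖lam ij.1 ij.2‖ := by
  set M := ⨆ ij : Fin k × Fin k', ‖lam ij.1 ij.2‖
  have hM0 : 0 ≤ M := Real.iSup_nonneg fun _ => norm_nonneg _
  have hupper := fun fg : {f : C₀(ℕ, 𝕂) →L[𝕂] 𝕂 // ‖f‖ ≤ 1} ×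
      {g : C₀(ℕ, 𝕂) →L[𝕂] 𝕂 // ‖g‖ ≤ 1} =>
    norm_dualPair_sum_smul_tmul_le (range k) (range k') lam hM0
      (norm_le_iSup_fin_prod k k' lam) fg.1.2 fg.2.2
  refine le_antisymm (Real.iSup_le hupper hM0) (Real.iSup_le (fun ij => ?_)
    (Real.iSup_nonneg fun _ => norm_nonneg _))
  rw [← dualPair_evalCLM_sum_smul_tmul (range k) (range k') lam
    (mem_range.2 ij.1.2) (mem_range.2 ij.2.2)]
  exact le_ciSup ⟨M, Set.forall_mem_range.2 hupper⟩
    (⟨evalCLM 𝕂 ij.1, norm_evalCLM_le 𝕂 _⟩, ⟨evalCLM 𝕂 ij.2, norm_evalCLM_le 𝕂 _⟩)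

/-- For the canonical unconditional Schauder basis `𝓕 = 𝓖 = ((e_m, e_m*))`
of `c₀`, the Besselian crossnorm of `u = ∑_{i<k} ∑_{j<k'} λ_{i,j} e_i ⊗ e_j` equals
`max_{i<k, j<k'} |λ_{i,j}|`, which is the injective tensor norm `ε(u)`. -/
theorem alphaBess_c0_eq_inj (k k' : ℕ) (lam : ℕ → ℕ → 𝕂) :
    alphaBessC0
        (∑ i ∈ Finset.range k, ∑ j ∈ Finset.range k',
          lam i j • (c0Basis 𝕂 i ⊗ₜ[𝕂] c0Basis 𝕂 j)) =
      (⨆ ij : Fin k × Fin k', ‖lam ij.1 ij.2‖) ∧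
    alphaBessC0
        (∑ i ∈ Finset.range k, ∑ j ∈ Finset.range k',
          lam i j • (c0Basis 𝕂 i ⊗ₜ[𝕂] c0Basis 𝕂 j)) =
      injNormC0
        (∑ i ∈ Finset.range k, ∑ j ∈ Finset.range k',
          lam i j • (c0Basis 𝕂 i ⊗ₜ[𝕂] c0Basis 𝕂 j)) :=
  ⟨alphaBessC0_sum_smul_tmul k k' lam,
    (alphaBessC0_sum_smul_tmul k k' lam).trans (injNormC0_sum_smul_tmul k k' lam).symm⟩
end

section
/- Let 𝓕 = 𝓖 = ((e_m, e_m*))_{m≥1} be the canonical unconditional Schauder basis of ℓ_1 with its coordinate functionals. Then for every u = ∑_{i=1}^k ∑_{j=1}^{k'} λ_{i,j} e_i ⊗ e_j in ℓ_1 ⊗ ℓ_1, α^Bess_{𝓕,𝓖}(u) = ∑_{i=1}^k ∑_{j=1}^{k'} |λ_{i,j}|, which equals the projective tensor norm π(u) of u in ℓ_1 ⊗ ℓ_1. -/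
open Filter Finset TensorProduct
open scoped ENNReal

variable {𝕂 : Type*} [RCLike 𝕂]

/-- `ℓ_1` over `𝕂`. -/
noncomputable abbrev ellOne (𝕂 : Type*) [RCLike 𝕂] := lp (fun _ : ℕ => 𝕂) 1

/-- The canonical basis vector `e_n` of `ℓ_1`. -/
noncomputable def eOne (𝕂 : Type*) [RCLike 𝕂] (n : ℕ) : ellOne 𝕂 :=
  lp.single 1 n (1 : 𝕂)

/-- The Besselian crossnorm `α^Bess_{𝓕,𝓖}` on `ℓ_1 ⊗ ℓ_1`, where `𝓕 = 𝓖` is the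
canonical unconditional Schauder basis `((e_m, e_m*))` of `ℓ_1` (so `e_m*(x) = x_m`). -/
noncomputable def alphaBessL1 (u : ellOne 𝕂 ⊗[𝕂] ellOne 𝕂) : ℝ :=
  sInf {t : ℝ | ∃ (R : ℕ) (x y : ℕ → ellOne 𝕂),
    u = ∑ r ∈ Finset.range R, x r ⊗ₜ[𝕂] y r ∧
    t = ⨆ fg : {f : ellOne 𝕂 →L[𝕂] 𝕂 // ‖f‖ ≤ 1} × {g : ellOne 𝕂 →L[𝕂] 𝕂 // ‖g‖ ≤ 1},
      ∑ r ∈ Finset.range R, ∑' mn : ℕ × ℕ,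
        ‖x r mn.1‖ * ‖y r mn.2‖ * ‖fg.1.1 (eOne 𝕂 mn.1)‖ * ‖fg.2.1 (eOne 𝕂 mn.2)‖}

/-- The projective tensor norm `π` on `ℓ_1 ⊗ ℓ_1` (with respect to the `ℓ_1` norms). -/
noncomputable def projNormL1 (u : ellOne 𝕂 ⊗[𝕂] ellOne 𝕂) : ℝ :=
  sInf {t : ℝ | ∃ (R : ℕ) (x y : ℕ → ellOne 𝕂),
    u = ∑ r ∈ Finset.range R, x r ⊗ₜ[𝕂] y r ∧
    t = ∑ r ∈ Finset.range R, ‖x r‖ * ‖y r‖}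

/-!
For every representation `u = ∑ x_r ⊗ y_r`, the supremum defining `Bess` equals
`∑ ‖x_r‖ ‖y_r‖`: each `|f(e_m)| ≤ 1`, so the double series is bounded by
`∑_m |x_r m| · ∑_n |y_r n| = ‖x_r‖ ‖y_r‖`, and the summation functional `f = g = ∑'`, of norm
`1` with `f(e_m) = 1`, attains the bound. Hence `α^Bess = π` on all of `ℓ_1 ⊗ ℓ_1`.
For `u = ∑ λ_{ij} e_i ⊗ e_j`, the representation by the `λ_{ij} e_i ⊗ e_j` gives
`π(u) ≤ ∑ |λ_{ij}|`, while applying the coefficient functionals `e_i* ⊗ e_j*` to an arbitrary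
representation gives `∑ |λ_{ij}| ≤ ∑_r ‖x_r‖ ‖y_r‖`.
-/

lemma Finset.sum_range_mul_div_mod {M : Type*} [AddCommMonoid M] (k k' : ℕ) (f : ℕ → ℕ → M) :
    ∑ r ∈ range (k * k'), f (r / k') (r % k') = ∑ i ∈ range k, ∑ j ∈ range k', f i j :=
  calc ∑ r ∈ range (k * k'), f (r / k') (r % k')
      = ∑ p : Fin k × Fin k', f p.1 p.2 := by
        rw [← Fin.sum_univ_eq_sum_range (fun r => f (r / k') (r % k'))]
        exact Fintype.sum_equiv finProdFinEquiv.symm _ _ fun _ => rfl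
    _ = ∑ i ∈ range k, ∑ j ∈ range k', f i j := by
        rw [Fintype.sum_prod_type, ← Fin.sum_univ_eq_sum_range]
        simp only [Fin.sum_univ_eq_sum_range (f _)]

namespace lp

variable {ι : Type*} {E : ι → Type*} [∀ i, NormedAddCommGroup (E i)]

lemma hasSum_norm_one (x : lp E 1) : HasSum (fun i => ‖x i‖) ‖x‖ := by
  simpa using hasSum_norm (p := 1) zero_lt_one x

lemma sum_norm_le_norm_one (x : lp E 1) (s : Finset ι) : ∑ i ∈ s, ‖x i‖ ≤ ‖x‖ :=
  sum_le_hasSum s (fun _ _ => norm_nonneg _) (hasSum_norm_one x)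

lemma hasSum_norm_mul_norm_one {κ : Type*} {F : κ → Type*} [∀ i, NormedAddCommGroup (F i)]
    (x : lp E 1) (y : lp F 1) :
    HasSum (fun mn : ι × κ => ‖x mn.1‖ * ‖y mn.2‖) (‖x‖ * ‖y‖) :=
  (hasSum_norm_one x).mul (hasSum_norm_one y)
    ((hasSum_norm_one x).summable.mul_of_nonneg (hasSum_norm_one y).summable
      (fun _ => norm_nonneg _) (fun _ => norm_nonneg _))

end lp

lemma eOne_apply (n m : ℕ) : eOne 𝕂 n m = if m = n then 1 else 0 := by
  simp [eOne, Pi.single_apply]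

lemma norm_eOne (n : ℕ) : ‖eOne 𝕂 n‖ = 1 := by
  simp [eOne, lp.norm_single]

lemma norm_apply_eOne_le {f : ellOne 𝕂 →L[𝕂] 𝕂} (hf : ‖f‖ ≤ 1) (n : ℕ) : ‖f (eOne 𝕂 n)‖ ≤ 1 :=
  (f.le_opNorm _).trans (by rw [norm_eOne, mul_one]; exact hf)

lemma tsumCLM_eOne (n : ℕ) : lp.tsumCLM 𝕂 ℕ 𝕂 (eOne 𝕂 n) = 1 := by
  simp [eOne]

/-- The summand of `Bess` contributed by one term `x ⊗ y` of a representation. -/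
noncomputable def besselTerm (x y : ellOne 𝕂) (f g : ellOne 𝕂 →L[𝕂] 𝕂) : ℝ :=
  ∑' mn : ℕ × ℕ, ‖x mn.1‖ * ‖y mn.2‖ * ‖f (eOne 𝕂 mn.1)‖ * ‖g (eOne 𝕂 mn.2)‖

lemma besselTerm_le (x y : ellOne 𝕂) {f g : ellOne 𝕂 →L[𝕂] 𝕂} (hf : ‖f‖ ≤ 1) (hg : ‖g‖ ≤ 1) :
    besselTerm x y f g ≤ ‖x‖ * ‖y‖ := by
  have hsum := lp.hasSum_norm_mul_norm_one x y
  have hle : ∀ mn : ℕ × ℕ, ‖x mn.1‖ * ‖y mn.2‖ * ‖f (eOne 𝕂 mn.1)‖ * ‖g (eOne 𝕂 mn.2)‖ ≤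
      ‖x mn.1‖ * ‖y mn.2‖ := fun mn => by
    rw [mul_assoc]
    exact mul_le_of_le_one_right (by positivity)
      (mul_le_one₀ (norm_apply_eOne_le hf _) (norm_nonneg _) (norm_apply_eOne_le hg _))
  calc besselTerm x y f g ≤ ∑' mn : ℕ × ℕ, ‖x mn.1‖ * ‖y mn.2‖ :=
        Summable.tsum_le_tsum hle
          (hsum.summable.of_nonneg_of_le (fun _ => by positivity) hle) hsum.summable
    _ = ‖x‖ * ‖y‖ := hsum.tsum_eq

lemma besselTerm_tsumCLM (x y : ellOne 𝕂) :
    besselTerm x y (lp.tsumCLM 𝕂 ℕ 𝕂) (lp.tsumCLM 𝕂 ℕ 𝕂) = ‖x‖ * ‖y‖ := by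
  simp only [besselTerm, tsumCLM_eOne, norm_one, mul_one]
  exact (lp.hasSum_norm_mul_norm_one x y).tsum_eq

lemma iSup_sum_besselTerm (R : ℕ) (x y : ℕ → ellOne 𝕂) :
    ⨆ fg : {f : ellOne 𝕂 →L[𝕂] 𝕂 // ‖f‖ ≤ 1} × {g : ellOne 𝕂 →L[𝕂] 𝕂 // ‖g‖ ≤ 1},
      ∑ r ∈ range R, besselTerm (x r) (y r) fg.1 fg.2 = ∑ r ∈ range R, ‖x r‖ * ‖y r‖ := by
  let tsumBall : {f : ellOne 𝕂 →L[𝕂] 𝕂 // ‖f‖ ≤ 1} := ⟨lp.tsumCLM 𝕂 ℕ 𝕂, lp.norm_tsumCLM_le⟩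
  have hle : ∀ fg : {f : ellOne 𝕂 →L[𝕂] 𝕂 // ‖f‖ ≤ 1} × {g : ellOne 𝕂 →L[𝕂] 𝕂 // ‖g‖ ≤ 1},
      ∑ r ∈ range R, besselTerm (x r) (y r) fg.1 fg.2 ≤ ∑ r ∈ range R, ‖x r‖ * ‖y r‖ :=
    fun fg => sum_le_sum fun r _ => besselTerm_le _ _ fg.1.2 fg.2.2
  have hattained : ∑ r ∈ range R, besselTerm (x r) (y r) tsumBall tsumBall =
      ∑ r ∈ range R, ‖x r‖ * ‖y r‖ :=
    sum_congr rfl fun r _ => besselTerm_tsumCLM _ _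
  have : Nonempty ({f : ellOne 𝕂 →L[𝕂] 𝕂 // ‖f‖ ≤ 1} × {g : ellOne 𝕂 →L[𝕂] 𝕂 // ‖g‖ ≤ 1}) :=
    ⟨(tsumBall, tsumBall)⟩
  exact le_antisymm (ciSup_le hle)
    (hattained ▸ le_ciSup ⟨_, Set.forall_mem_range.2 hle⟩ (tsumBall, tsumBall))

theorem alphaBessL1_eq_projNormL1 (u : ellOne 𝕂 ⊗[𝕂] ellOne 𝕂) :
    alphaBessL1 u = projNormL1 u := by
  simp only [projNormL1, ← iSup_sum_besselTerm]
  rfl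

noncomputable def coeffL1 (i j : ℕ) : ellOne 𝕂 ⊗[𝕂] ellOne 𝕂 →ₗ[𝕂] 𝕂 :=
  dualPair (lp.evalCLM 𝕂 _ 1 i) (lp.evalCLM 𝕂 _ 1 j)

@[simp]
lemma coeffL1_tmul (i j : ℕ) (x y : ellOne 𝕂) : coeffL1 i j (x ⊗ₜ y) = x i * y j := rfl

lemma sum_norm_coeffL1_le {u : ellOne 𝕂 ⊗[𝕂] ellOne 𝕂} {R : ℕ} {x y : ℕ → ellOne 𝕂}
    (hu : u = ∑ r ∈ range R, x r ⊗ₜ[𝕂] y r) (s t : Finset ℕ) :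
    ∑ i ∈ s, ∑ j ∈ t, ‖coeffL1 i j u‖ ≤ ∑ r ∈ range R, ‖x r‖ * ‖y r‖ :=
  calc ∑ i ∈ s, ∑ j ∈ t, ‖coeffL1 i j u‖
      ≤ ∑ i ∈ s, ∑ j ∈ t, ∑ r ∈ range R, ‖x r i‖ * ‖y r j‖ := by
        gcongr with i _ j _
        rw [hu, map_sum]
        simp only [coeffL1_tmul]
        exact (norm_sum_le _ _).trans (sum_le_sum fun r _ => (norm_mul _ _).le)
    _ = ∑ r ∈ range R, (∑ i ∈ s, ‖x r i‖) * ∑ j ∈ t, ‖y r j‖ := by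
        simp_rw [sum_mul_sum]
        exact (sum_congr rfl fun i _ => sum_comm).trans sum_comm
    _ ≤ ∑ r ∈ range R, ‖x r‖ * ‖y r‖ := by
        gcongr with r _
        exacts [lp.sum_norm_le_norm_one _ _, lp.sum_norm_le_norm_one _ _]

lemma coeffL1_sum_sum_smul_eOne_tmul {k k' i j : ℕ} (lam : ℕ → ℕ → 𝕂) (hi : i < k) (hj : j < k') :
    coeffL1 i j (∑ i ∈ range k, ∑ j ∈ range k', lam i j • (eOne 𝕂 i ⊗ₜ[𝕂] eOne 𝕂 j)) =
      lam i j := by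
  simp [map_sum, eOne_apply, hi, hj]

theorem projNormL1_sum_sum_smul_eOne_tmul (k k' : ℕ) (lam : ℕ → ℕ → 𝕂) :
    projNormL1 (∑ i ∈ range k, ∑ j ∈ range k', lam i j • (eOne 𝕂 i ⊗ₜ[𝕂] eOne 𝕂 j)) =
      ∑ i ∈ range k, ∑ j ∈ range k', ‖lam i j‖ := by
  refine IsLeast.csInf_eq ⟨⟨k * k', fun r => lam (r / k') (r % k') • eOne 𝕂 (r / k'),
    fun r => eOne 𝕂 (r % k'), ?_, ?_⟩, ?_⟩
  · rw [sum_range_mul_div_mod k k' fun i j => (lam i j • eOne 𝕂 i) ⊗ₜ[𝕂] eOne 𝕂 j]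
    simp only [smul_tmul']
  · rw [sum_range_mul_div_mod k k' fun i j => ‖lam i j • eOne 𝕂 i‖ * ‖eOne 𝕂 j‖]
    simp only [norm_smul, norm_eOne, mul_one]
  · rintro t ⟨R, x, y, hu, rfl⟩
    calc ∑ i ∈ range k, ∑ j ∈ range k', ‖lam i j‖
        = ∑ i ∈ range k, ∑ j ∈ range k', ‖coeffL1 i j
            (∑ i ∈ range k, ∑ j ∈ range k', lam i j • (eOne 𝕂 i ⊗ₜ[𝕂] eOne 𝕂 j))‖ := by
          refine sum_congr rfl fun i hi => sum_congr rfl fun j hj => ?_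
          rw [coeffL1_sum_sum_smul_eOne_tmul lam (mem_range.1 hi) (mem_range.1 hj)]
      _ ≤ _ := sum_norm_coeffL1_le hu _ _

/-- For the canonical unconditional Schauder basis `𝓕 = 𝓖 = ((e_m, e_m*))`
of `ℓ_1`, the Besselian crossnorm of `u = ∑_{i<k} ∑_{j<k'} λ_{i,j} e_i ⊗ e_j` equals
`∑_{i<k} ∑_{j<k'} |λ_{i,j}|`, which is the projective tensor norm `π(u)`. -/
theorem alphaBess_ellOne_eq_proj (k k' : ℕ) (lam : ℕ → ℕ → 𝕂) :
    alphaBessL1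
        (∑ i ∈ Finset.range k, ∑ j ∈ Finset.range k',
          lam i j • (eOne 𝕂 i ⊗ₜ[𝕂] eOne 𝕂 j)) =
      ∑ i ∈ Finset.range k, ∑ j ∈ Finset.range k', ‖lam i j‖ ∧
    alphaBessL1
        (∑ i ∈ Finset.range k, ∑ j ∈ Finset.range k',
          lam i j • (eOne 𝕂 i ⊗ₜ[𝕂] eOne 𝕂 j)) =
      projNormL1
        (∑ i ∈ Finset.range k, ∑ j ∈ Finset.range k',
          lam i j • (eOne 𝕂 i ⊗ₜ[𝕂] eOne 𝕂 j)) :=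
  ⟨(alphaBessL1_eq_projNormL1 _).trans (projNormL1_sum_sum_smul_eOne_tmul k k' lam),
    alphaBessL1_eq_projNormL1 _⟩
end
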